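/- Let n ≥ 1 and q ∈ ℂ with q ≠ 0 and q^j ≠ 1 for all 1 ≤ j ≤ n-1. Let T_q be the n×n lower-triangular Toeplitz matrix with entries t_{i,j} = 1/(q;q)_{i-j} for i ≥ j and 0 otherwise, and let S be the n×n lower shift matrix (s_{i,j} = 1 if i = j+1, 0 otherwise). Then T_q T_{q^{-1}} (I - S) = I, i.e., the inverse of T_q equals T_{q^{-1}}(I - S). -/
import Mathlib


noncomputable def qPoch (z q : ℂ) (n : ℕ) : ℂ := ∏ i ∈ Finset.range n, (1 - z * q ^ i)

lemma qPoch_zero (z q : ℂ) : qPoch z q 0 = 1 := by simp [qPoch]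

lemma qPoch_succ (z q : ℂ) (n : ℕ) : qPoch z q (n+1) = qPoch z q n * (1 - z * q ^ n) := by
  simp [qPoch, Finset.prod_range_succ]

lemma pochq_ne (q : ℂ) (m : ℕ) (h : ∀ j : ℕ, 1 ≤ j → j ≤ m → q ^ j ≠ 1) :
    qPoch q q m ≠ 0 := by
  rw [qPoch]
  apply Finset.prod_ne_zero_iff.2
  intro i hi
  rw [Finset.mem_range] at hi
  have : q * q ^ i = q ^ (i+1) := by ring
  rw [this]
  intro hc
  exact h (i+1) (by omega) (by omega) (by linear_combination -hc)

lemma pochqi_ne (q : ℂ) (hq0 : q ≠ 0) (m : ℕ) (h : ∀ j : ℕ, 1 ≤ j → j ≤ m → q ^ j ≠ 1) :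
    qPoch q⁻¹ q⁻¹ m ≠ 0 := by
  rw [qPoch]
  apply Finset.prod_ne_zero_iff.2
  intro i hi
  rw [Finset.mem_range] at hi
  have h1 : q⁻¹ * q⁻¹ ^ i = (q ^ (i+1))⁻¹ := by
    rw [pow_succ, mul_inv, inv_pow]; ring
  rw [h1]
  intro hc
  have hp : (q : ℂ) ^ (i+1) ≠ 0 := pow_ne_zero _ hq0
  have h2 : (q ^ (i+1))⁻¹ = 1 := by linear_combination -hc
  have h3 : q ^ (i+1) = 1 := by field_simp at h2; exact h2.symm
  exact h (i+1) (by omega) (by omega) h3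

lemma aux1 (A u : ℂ) (hA : A ≠ 0) (hu : u ≠ 0) (h1 : u - 1 ≠ 0) :
    (1 - u) * (1 / (A * ((u - 1) / u))) = 0 - u * (1 / A) := by
  field_simp [hA, hu, h1]
  ring

lemma aux2 (A B u w : ℂ) (hA : A ≠ 0) (hB : B ≠ 0) (hu : u ≠ 0)
    (h1 : u - 1 ≠ 0) (h2 : 1 - w ≠ 0) :
    (1 - w * u) * (1 / (A * ((u - 1) / u) * (B * (1 - w)))) =
      1 / (A * ((u - 1) / u) * B) - w * u * (1 / (A * (B * (1 - w)))) := by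
  field_simp [hA, hB, hu, h1, h2]
  ring

lemma key (q : ℂ) (hq0 : q ≠ 0) : ∀ m : ℕ, (∀ j : ℕ, 1 ≤ j → j ≤ m → q ^ j ≠ 1) →
    ∑ k ∈ Finset.range (m+1), 1 / (qPoch q⁻¹ q⁻¹ k * qPoch q q (m - k)) = 1 := by
  intro m
  induction m with
  | zero => intro _; simp [qPoch]
  | succ m ih =>
    intro h
    have h' : ∀ j : ℕ, 1 ≤ j → j ≤ m → q ^ j ≠ 1 := fun j h1 h2 => h j h1 (by omega)
    have hIH := ih h'
    have hQ : (1 : ℂ) - q ^ (m+1) ≠ 0 := by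
      intro hc
      exact h (m+1) (by omega) le_rfl (by linear_combination -hc)
    have hptwise : ∀ k ∈ Finset.range (m+2),
        (1 - q ^ (m+1)) * (1 / (qPoch q⁻¹ q⁻¹ k * qPoch q q (m + 1 - k))) =
        (if k ≤ m then 1 / (qPoch q⁻¹ q⁻¹ k * qPoch q q (m - k)) else 0)
        - q ^ (m+1) * (if 1 ≤ k then 1 / (qPoch q⁻¹ q⁻¹ (k-1) * qPoch q q (m + 1 - k)) else 0) := by
      intro k hk
      rw [Finset.mem_range] at hk
      rcases Nat.eq_zero_or_pos k with hk0 | hk1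
      · subst hk0
        rw [if_pos (Nat.zero_le m), if_neg (show ¬ (1:ℕ) ≤ 0 by omega)]
        simp only [qPoch_zero, one_mul, Nat.sub_zero]
        have e : qPoch q q (m+1) = qPoch q q m * (1 - q * q ^ m) := qPoch_succ q q m
        have hPm : qPoch q q m ≠ 0 := pochq_ne q m h'
        rw [e]
        have e2 : (1:ℂ) - q * q ^ m = 1 - q ^ (m+1) := by ring
        rw [e2]
        field_simp
        ring
      · rcases Nat.lt_or_ge k (m+1) with hkm | hkm
        · -- 1 ≤ k ≤ m
          rw [if_pos (show k ≤ m by omega), if_pos (show 1 ≤ k from hk1)]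
          obtain ⟨j, rfl⟩ : ∃ j, k = j + 1 := ⟨k - 1, by omega⟩
          have e1 : qPoch q⁻¹ q⁻¹ (j+1) = qPoch q⁻¹ q⁻¹ j * (1 - q⁻¹ * q⁻¹ ^ j) := qPoch_succ _ _ _
          have e2 : m + 1 - (j+1) = (m - (j+1)) + 1 := by omega
          have e3 : qPoch q q (m + 1 - (j+1)) = qPoch q q (m - (j+1)) * (1 - q * q ^ (m - (j+1))) := by
            rw [e2, qPoch_succ]
          have hPj : qPoch q⁻¹ q⁻¹ j ≠ 0 := pochqi_ne q hq0 j (fun i h1 h2 => h i h1 (by omega))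
          have hPm : qPoch q q (m - (j+1)) ≠ 0 := pochq_ne q _ (fun i h1 h2 => h i h1 (by omega))
          have hsub : (j+1) - 1 = j := by omega
          rw [hsub, e1, e3]
          have hqj : (q:ℂ) ^ (j+1) ≠ 0 := pow_ne_zero _ hq0
          have hinv : q⁻¹ * q⁻¹ ^ j = (q ^ (j+1))⁻¹ := by
            rw [pow_succ, mul_inv, inv_pow]; ring
          have hrwf : (1:ℂ) - q⁻¹ * q⁻¹ ^ j = (q ^ (j+1) - 1) / q ^ (j+1) := by
            rw [hinv]; field_simp
          rw [hrwf]
          have hne1 : (q:ℂ) ^ (j+1) - 1 ≠ 0 := by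
            intro hc
            exact h (j+1) (by omega) (by omega) (by linear_combination hc)
          have hfac2 : (1:ℂ) - q * q ^ (m - (j+1)) ≠ 0 := by
            intro hc
            apply h (m - j) (by omega) (by omega)
            have e : q * q ^ (m - (j+1)) = q ^ (m - j) := by
              rw [← pow_succ']
              congr 1
              omega
            rw [e] at hc
            linear_combination -hc
          have epow : q ^ (m+1) = q * q ^ (m - (j+1)) * q ^ (j+1) := by
            rw [mul_assoc, ← pow_add, ← pow_succ']
            congr 1
            omega
          rw [epow]
          obtain ⟨u, hu⟩ : ∃ u : ℂ, q ^ (j+1) = u := ⟨_, rfl⟩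
          obtain ⟨v, hv⟩ : ∃ v : ℂ, q ^ (m - (j+1)) = v := ⟨_, rfl⟩
          rw [hu] at hqj hne1 ⊢
          rw [hv] at hfac2 ⊢
          exact aux2 _ _ u (q*v) hPj hPm hqj hne1 hfac2
        · -- k = m+1
          have hke : k = m + 1 := by omega
          subst hke
          rw [if_neg (show ¬ m+1 ≤ m by omega), if_pos (show 1 ≤ m+1 by omega)]
          simp only [Nat.add_sub_cancel, Nat.sub_self, qPoch_zero, mul_one]
          have e1 : qPoch q⁻¹ q⁻¹ (m+1) = qPoch q⁻¹ q⁻¹ m * (1 - q⁻¹ * q⁻¹ ^ m) := qPoch_succ _ _ _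
          have hPm : qPoch q⁻¹ q⁻¹ m ≠ 0 := pochqi_ne q hq0 m h'
          have hqm : (q:ℂ) ^ (m+1) ≠ 0 := pow_ne_zero _ hq0
          have hinv : q⁻¹ * q⁻¹ ^ m = (q ^ (m+1))⁻¹ := by
            rw [pow_succ, mul_inv, inv_pow]; ring
          have hrwf : (1:ℂ) - q⁻¹ * q⁻¹ ^ m = (q ^ (m+1) - 1) / q ^ (m+1) := by
            rw [hinv]; field_simp
          have hne1 : (q:ℂ) ^ (m+1) - 1 ≠ 0 := by
            intro hc
            exact h (m+1) (by omega) le_rfl (by linear_combination hc)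
          rw [e1, hrwf]
          obtain ⟨u, hu⟩ : ∃ u : ℂ, q ^ (m+1) = u := ⟨_, rfl⟩
          rw [hu] at hqm hne1 ⊢
          exact aux1 _ u hPm hqm hne1
    have hsum : (1 - q ^ (m+1)) * (∑ k ∈ Finset.range (m+2), 1 / (qPoch q⁻¹ q⁻¹ k * qPoch q q (m + 1 - k)))
        = (1 - q ^ (m+1)) * 1 := by
      rw [Finset.mul_sum, Finset.sum_congr rfl hptwise, Finset.sum_sub_distrib]
      have hA : ∑ k ∈ Finset.range (m+2), (if k ≤ m then 1 / (qPoch q⁻¹ q⁻¹ k * qPoch q q (m - k)) else 0) = 1 := by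
        rw [Finset.sum_range_succ, if_neg (show ¬ m+1 ≤ m by omega), add_zero]
        rw [Finset.sum_congr rfl (fun k hk => if_pos (by rw [Finset.mem_range] at hk; omega))]
        exact hIH
      have hB : ∑ k ∈ Finset.range (m+2), (q ^ (m+1) * (if 1 ≤ k then 1 / (qPoch q⁻¹ q⁻¹ (k-1) * qPoch q q (m + 1 - k)) else 0)) = q ^ (m+1) := by
        rw [← Finset.mul_sum]
        have : ∑ k ∈ Finset.range (m+2), (if 1 ≤ k then 1 / (qPoch q⁻¹ q⁻¹ (k-1) * qPoch q q (m + 1 - k)) else 0) = 1 := by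
          rw [Finset.sum_range_succ']
          simp only [if_neg (show ¬ (1:ℕ) ≤ 0 by omega), add_zero]
          have e : ∀ k ∈ Finset.range (m+1),
              (if 1 ≤ k + 1 then 1 / (qPoch q⁻¹ q⁻¹ (k+1-1) * qPoch q q (m + 1 - (k+1))) else 0)
              = 1 / (qPoch q⁻¹ q⁻¹ k * qPoch q q (m - k)) := by
            intro k hk
            rw [if_pos (by omega)]
            simp [Nat.succ_sub_succ]
          rw [Finset.sum_congr rfl e]
          exact hIH
        rw [this, mul_one]
      rw [hA, hB]
      ring
    have := mul_left_cancel₀ hQ hsum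
    simpa using this

theorem stmt7 (n : ℕ) (hn : 1 ≤ n) (q : ℂ) (hq0 : q ≠ 0)
    (hq : ∀ j : ℕ, 1 ≤ j → j ≤ n - 1 → q ^ j ≠ 1)
    (T T' S : Matrix (Fin n) (Fin n) ℂ)
    (hT : ∀ i j : Fin n, T i j =
      if (j : ℕ) ≤ (i : ℕ) then 1 / qPoch q q ((i : ℕ) - (j : ℕ)) else 0)
    (hT' : ∀ i j : Fin n, T' i j =
      if (j : ℕ) ≤ (i : ℕ) then 1 / qPoch q⁻¹ q⁻¹ ((i : ℕ) - (j : ℕ)) else 0)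
    (hS : ∀ i j : Fin n, S i j = if (i : ℕ) = (j : ℕ) + 1 then 1 else 0) :
    T * T' * (1 - S) = 1 := by
  have hL : ∀ i j : Fin n, (T * T') i j = if (j : ℕ) ≤ (i : ℕ) then 1 else 0 := by
    intro i j
    rw [Matrix.mul_apply]
    have h1 : ∑ k : Fin n, T i k * T' k j =
        ∑ k ∈ Finset.range n, ((if k ≤ (i:ℕ) then 1 / qPoch q q ((i:ℕ) - k) else 0) *
          (if (j:ℕ) ≤ k then 1 / qPoch q⁻¹ q⁻¹ (k - (j:ℕ)) else 0)) := by
      rw [← Fin.sum_univ_eq_sum_range]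
      refine Finset.sum_congr rfl (fun k _ => ?_)
      rw [hT, hT']
    rw [h1]
    by_cases hij : (j:ℕ) ≤ (i:ℕ)
    · rw [if_pos hij]
      have hsub : Finset.Icc (j:ℕ) (i:ℕ) ⊆ Finset.range n := by
        intro x hx
        rw [Finset.mem_Icc] at hx
        rw [Finset.mem_range]
        exact lt_of_le_of_lt hx.2 i.isLt
      rw [← Finset.sum_subset hsub (fun x hx hnx => by
        rw [Finset.mem_Icc] at hnx
        push_neg at hnx
        by_cases hxi : x ≤ (i:ℕ)
        · rw [if_neg (show ¬ (j:ℕ) ≤ x by intro hc; exact absurd (hnx hc) (by omega)), mul_zero]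
        · rw [if_neg hxi, zero_mul])]
      rw [← Finset.Ico_add_one_right_eq_Icc, Finset.sum_Ico_eq_sum_range]
      have e1 : (i:ℕ) + 1 - (j:ℕ) = ((i:ℕ) - (j:ℕ)) + 1 := by omega
      rw [e1]
      have e2 : ∀ t ∈ Finset.range (((i:ℕ) - (j:ℕ)) + 1),
          ((if (j:ℕ) + t ≤ (i:ℕ) then 1 / qPoch q q ((i:ℕ) - ((j:ℕ) + t)) else 0) *
           (if (j:ℕ) ≤ (j:ℕ) + t then 1 / qPoch q⁻¹ q⁻¹ ((j:ℕ) + t - (j:ℕ)) else 0))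
          = 1 / (qPoch q⁻¹ q⁻¹ t * qPoch q q (((i:ℕ) - (j:ℕ)) - t)) := by
        intro t ht
        rw [Finset.mem_range] at ht
        rw [if_pos (by omega), if_pos (by omega)]
        have e3 : (i:ℕ) - ((j:ℕ) + t) = ((i:ℕ) - (j:ℕ)) - t := by omega
        have e4 : (j:ℕ) + t - (j:ℕ) = t := by omega
        rw [e3, e4, one_div_mul_one_div, mul_comm]
      rw [Finset.sum_congr rfl e2]
      exact key q hq0 ((i:ℕ) - (j:ℕ)) (fun j' h1 h2 => hq j' h1 (by omega))
    · rw [if_neg hij]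
      refine Finset.sum_eq_zero (fun x hx => ?_)
      by_cases hxi : x ≤ (i:ℕ)
      · rw [if_neg (show ¬ (j:ℕ) ≤ x by omega), mul_zero]
      · rw [if_neg hxi, zero_mul]
  ext i j
  rw [Matrix.mul_apply]
  have h2 : ∀ k : Fin n, (T * T') i k * (1 - S) k j =
      (if (k:ℕ) ≤ (i:ℕ) then (1:ℂ) else 0) * ((if k = j then 1 else 0) - (if (k:ℕ) = (j:ℕ) + 1 then 1 else 0)) := by
    intro k
    rw [hL, Matrix.sub_apply, Matrix.one_apply, hS]
  rw [Finset.sum_congr rfl (fun k _ => h2 k)]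
  simp only [mul_sub]
  rw [Finset.sum_sub_distrib]
  have hA : ∑ k : Fin n, (if (k:ℕ) ≤ (i:ℕ) then (1:ℂ) else 0) * (if k = j then 1 else 0)
      = if (j:ℕ) ≤ (i:ℕ) then 1 else 0 := by
    simp only [mul_ite, mul_one, mul_zero]
    rw [Finset.sum_ite_eq' Finset.univ j (fun k => if (k:ℕ) ≤ (i:ℕ) then (1:ℂ) else 0)]
    rw [if_pos (Finset.mem_univ j)]
  have hB : ∑ k : Fin n, (if (k:ℕ) ≤ (i:ℕ) then (1:ℂ) else 0) * (if (k:ℕ) = (j:ℕ) + 1 then 1 else 0)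
      = if ((j:ℕ) + 1 < n ∧ (j:ℕ) + 1 ≤ (i:ℕ)) then 1 else 0 := by
    have hcv : ∑ k : Fin n, (if (k:ℕ) ≤ (i:ℕ) then (1:ℂ) else 0) * (if (k:ℕ) = (j:ℕ) + 1 then 1 else 0)
        = ∑ k ∈ Finset.range n, ((if k ≤ (i:ℕ) then (1:ℂ) else 0) * (if k = (j:ℕ) + 1 then 1 else 0)) := by
      rw [← Fin.sum_univ_eq_sum_range]
    rw [hcv]
    have e : ∀ k ∈ Finset.range n, ((if k ≤ (i:ℕ) then (1:ℂ) else 0) * (if k = (j:ℕ) + 1 then 1 else 0))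
        = if k = (j:ℕ) + 1 then (if (j:ℕ) + 1 ≤ (i:ℕ) then (1:ℂ) else 0) else 0 := by
      intro k _
      by_cases hk : k = (j:ℕ) + 1
      · subst hk; rw [if_pos rfl, if_pos rfl, mul_one]
      · rw [if_neg hk, if_neg hk, mul_zero]
    rw [Finset.sum_congr rfl e, Finset.sum_ite_eq' (Finset.range n) ((j:ℕ)+1)
      (fun _ => if (j:ℕ) + 1 ≤ (i:ℕ) then (1:ℂ) else 0)]
    by_cases hjn : (j:ℕ) + 1 < n
    · rw [if_pos (Finset.mem_range.2 hjn)]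
      by_cases hji : (j:ℕ) + 1 ≤ (i:ℕ)
      · rw [if_pos hji, if_pos ⟨hjn, hji⟩]
      · rw [if_neg hji, if_neg (by tauto)]
    · rw [if_neg (by rw [Finset.mem_range]; exact hjn), if_neg (by tauto)]
  rw [hA, hB, Matrix.one_apply]
  have hi : (i:ℕ) < n := i.isLt
  have hj : (j:ℕ) < n := j.isLt
  by_cases hij : i = j
  · subst hij
    rw [if_pos rfl, if_pos le_rfl, if_neg (by omega)]
    ring
  · rw [if_neg hij]
    have hij' : (i:ℕ) ≠ (j:ℕ) := fun hc => hij (Fin.ext hc)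
    by_cases hle : (j:ℕ) ≤ (i:ℕ)
    · rw [if_pos hle, if_pos (by omega)]
      ring
    · rw [if_neg hle, if_neg (by omega)]
      ring
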